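/- Let τ : A → A⁺ be a one-to-one primitive substitution of constant length p with X_τ infinite, with a ≠ b in A satisfying τ(a) = uavaw, τ(b) = u'bv'bw', |u| = |u'| ≠ 0, |v| = |v'|, |w| = |w'| ≠ 0, and vaw has a coincidence with v'bw'. Then the pair x = ...τ²ᵐ(u)τ^{2m−1}(uav)...τ(uav)u.avaw τ(w)...τ^{2m−1}(w)τ^{2m}(vaw)... , y = ...τ²ᵐ(u')τ^{2m−1}(u'bv')...τ(u'bv')u'.bv'bw' τ(w')...τ^{2m−1}(w')τ^{2m}(v'bw')... is a Li–Yorke pair which is recurrent under T×T, i.e., a strong Li–Yorke pair: for every n ∈ ℕ there is m with (x(−n,n), y(−n,n)) occurring as a subword-pair of (τ^{2m}(a), τ^{2m}(b)). -/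

import Mathlib

/-- Extension of a substitution to finite words, by concatenation. -/
def substWord {A : Type*} (τ : A → List A) (w : List A) : List A :=
  (w.map τ).flatten

/-- The shift map on two-sided sequences. -/
def shift {A : Type*} (x : ℤ → A) : ℤ → A := fun i => x (i + 1)

/-- Extension of a constant-length-`p` substitution to two-sided sequences:
the block `τ(x_q)` occupies coordinates `[pq, pq + p)` of `τ(x)`. -/
def substExt {A : Type*} [Inhabited A] (τ : A → List A) (p : ℕ) (x : ℤ → A) :
    ℤ → A :=
  fun i => (τ (x (i / (p : ℤ)))).getD (i % (p : ℤ)).toNat default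

/-- A substitution is primitive if some power sends every letter to a word
containing every letter. -/
def IsPrimitive {A : Type*} (τ : A → List A) : Prop :=
  ∃ n : ℕ, ∀ a b : A, a ∈ (substWord τ)^[n] [b]

/-- The subshift generated by `τ`: sequences all of whose finite subwords occur
in some `τⁿ(a)`. -/
def XSet {A : Type*} (τ : A → List A) : Set (ℤ → A) :=
  {x | ∀ (i : ℤ) (l : ℕ), ∃ (n : ℕ) (c : A),
    (List.ofFn fun j : Fin l => x (i + (j : ℤ))) <:+: (substWord τ)^[n] [c]}

/-- Proximality of a pair for the shift on `A^ℤ` (with the product topology):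
arbitrarily large central windows agree at some arbitrarily late time. -/
def IsProximalPair {A : Type*} (x y : ℤ → A) : Prop :=
  ∀ N M : ℕ, ∃ n : ℕ, M ≤ n ∧ ∀ j : ℤ, |j| ≤ (N : ℤ) → x (j + n) = y (j + n)

/-- A Li–Yorke pair for the shift on `A^ℤ`: proximal but not asymptotic
(the two sequences differ at infinitely many coordinates). -/
def IsLiYorkePair {A : Type*} (x y : ℤ → A) : Prop :=
  IsProximalPair x y ∧ {m : ℤ | x m ≠ y m}.Infinite

/-- The left word `τᵐ(f m) ⋯ τ(f 1) (f 0)`. -/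
def leftWord {A : Type*} (τ : A → List A) (f : ℕ → List A) : ℕ → List A
  | 0 => f 0
  | m + 1 => (substWord τ)^[m + 1] (f (m + 1)) ++ leftWord τ f m

/-- The right word `(g 0) τ(g 1) ⋯ τᵐ(g m)`. -/
def rightWord {A : Type*} (τ : A → List A) (g : ℕ → List A) : ℕ → List A
  | 0 => g 0
  | m + 1 => rightWord τ g m ++ (substWord τ)^[m + 1] (g (m + 1))

/-!
Let `ℓₘ = centerIndex τ a u v m` be the length of the `m`-th left word. The hypotheses say that
`x` reads `τ^{m+1}(a)` starting at coordinate `-ℓₘ`, and `y` reads `τ^{m+1}(b)` from the same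
coordinate because `|u| = |u'|` and `|v| = |v'|`. At an even level `e`,
`τ^{e+1}(a) = τ^e(u) τ^e(a) τ^e(v) τ^e(a) τ^e(w)`, and the first copy of `τ^e(a)` is the one read
at `-ℓ_{e-1}`. The second copy, `p^e (|v| + 1)` further right, shows that this shift fixes a window
around the origin in `x`, and likewise in `y`: this is recurrence, and since `x 0 = a ≠ b = y 0`
it also makes `x` and `y` differ infinitely often. The coincidence `(vaw)ⱼ = (v'bw')ⱼ` puts a
common block `τ^e(c)` inside `τ^e(vaw)` and `τ^e(v'bw')`, read at the same coordinates in `x` and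
`y`: this is proximality.
-/

open Function

section SubstWord

variable {A : Type*}

theorem substWord_append (τ : A → List A) (w₁ w₂ : List A) :
    substWord τ (w₁ ++ w₂) = substWord τ w₁ ++ substWord τ w₂ := by
  simp [substWord]

theorem substWord_singleton (τ : A → List A) (c : A) : substWord τ [c] = τ c := by
  simp [substWord]

theorem iterate_substWord_append (τ : A → List A) (m : ℕ) (w₁ w₂ : List A) :
    (substWord τ)^[m] (w₁ ++ w₂) = (substWord τ)^[m] w₁ ++ (substWord τ)^[m] w₂ := by
  induction m generalizing w₁ w₂ with
  | zero => rfl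
  | succ m ih => simp only [iterate_succ_apply, substWord_append, ih]

variable {τ : A → List A} {p : ℕ}

theorem length_substWord (hlen : ∀ c, (τ c).length = p) (w : List A) :
    (substWord τ w).length = p * w.length := by
  induction w with
  | nil => simp [substWord]
  | cons c w ih =>
    rw [← List.singleton_append, substWord_append, List.length_append, substWord_singleton, hlen,
      ih, List.length_append, List.length_singleton]
    ring

theorem length_iterate_substWord (hlen : ∀ c, (τ c).length = p) (m : ℕ) (w : List A) :
    ((substWord τ)^[m] w).length = p ^ m * w.length := by
  induction m generalizing w with
  | zero => simp
  | succ m ih => rw [iterate_succ_apply, ih, length_substWord hlen, pow_succ, mul_assoc]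

theorem length_leftWord_succ (hlen : ∀ c, (τ c).length = p) (f : ℕ → List A) (m : ℕ) :
    (leftWord τ f (m + 1)).length =
      p ^ (m + 1) * (f (m + 1)).length + (leftWord τ f m).length := by
  rw [leftWord, List.length_append, length_iterate_substWord hlen]

theorem length_leftWord_congr (hlen : ∀ c, (τ c).length = p) {f f' : ℕ → List A}
    (h : ∀ i, (f i).length = (f' i).length) (m : ℕ) :
    (leftWord τ f m).length = (leftWord τ f' m).length := by
  induction m with
  | zero => exact h 0
  | succ m ih => rw [length_leftWord_succ hlen, length_leftWord_succ hlen, h, ih]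

theorem le_length_leftWord (hlen : ∀ c, (τ c).length = p) (f : ℕ → List A) (m : ℕ) :
    p ^ m * (f m).length ≤ (leftWord τ f m).length := by
  cases m with
  | zero => simp [leftWord]
  | succ m => rw [length_leftWord_succ hlen]; omega

theorem le_length_rightWord (hlen : ∀ c, (τ c).length = p) (g : ℕ → List A) (m : ℕ) :
    p ^ m * (g m).length ≤ (rightWord τ g m).length := by
  cases m with
  | zero => simp [rightWord]
  | succ m => rw [rightWord, List.length_append, length_iterate_substWord hlen]; omega

end SubstWord

section OccursAt

variable {A : Type*}

def OccursAt (x : ℤ → A) (W : List A) (s : ℤ) : Prop :=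
  ∀ t (ht : t < W.length), x (s + t) = W[t]

variable {x y : ℤ → A} {W W₁ W₂ W₃ : List A} {s s' : ℤ}

theorem occursAt_neg_of_getD [Inhabited A] {c : ℕ}
    (h : ∀ j : ℕ, j < W.length → x (j - c) = W.getD j default) : OccursAt x W (-c) := by
  intro t ht
  rw [← List.getD_eq_getElem W default ht, ← h t ht, neg_add_eq_sub]

theorem OccursAt.infix (h : OccursAt x (W₁ ++ W₂ ++ W₃) s) :
    OccursAt x W₂ (s + W₁.length) := by
  intro t ht
  have := h (W₁.length + t) (by simp; omega)
  rw [List.getElem_append_left (by simp; omega), List.getElem_append_right (by omega)] at this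
  simpa [add_assoc] using this

theorem OccursAt.apply_eq (hx : OccursAt x W s) (hy : OccursAt y W s') {i : ℤ} (h₁ : s ≤ i)
    (h₂ : i < s + W.length) : x i = y (i - s + s') := by
  obtain ⟨t, rfl⟩ : ∃ t : ℕ, i = s + t := ⟨(i - s).toNat, by omega⟩
  rw [hx t (by omega), show s + t - s + s' = s' + t by ring, hy t (by omega)]

theorem OccursAt.iterate_substWord_getElem {τ : A → List A} {p m : ℕ}
    (hlen : ∀ c, (τ c).length = p) (h : OccursAt x ((substWord τ)^[m] W) s) {j : ℕ}
    (hj : j < W.length) : OccursAt x ((substWord τ)^[m] [W[j]]) (s + (p ^ m * j : ℕ)) := by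
  rw [← List.take_append_drop j W, ← List.getElem_cons_drop hj, ← List.singleton_append,
    ← List.append_assoc, iterate_substWord_append, iterate_substWord_append] at h
  simpa [length_iterate_substWord hlen, Nat.min_eq_left hj.le] using h.infix

end OccursAt

theorem infinite_setOf_ne_of_recurrent {A : Type*} {x y : ℤ → A} (h0 : x 0 ≠ y 0)
    (hrec : ∀ K : ℕ, ∃ k : ℕ, K ≤ k ∧ x k = x 0 ∧ y k = y 0) :
    {i : ℤ | x i ≠ y i}.Infinite := by
  refine Set.infinite_of_forall_exists_gt fun K => ?_
  obtain ⟨k, hk, hxk, hyk⟩ := hrec (K.toNat + 1)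
  exact ⟨k, by simpa [hxk, hyk] using h0, by omega⟩

section StrongLiYorke

variable {A : Type*} {τ : A → List A} {p : ℕ} {a b : A} {u v w u' v' w' : List A}
  {x y : ℤ → A}

def leftSeed (a : A) (u v : List A) (i : ℕ) : List A :=
  if i % 2 = 0 then u else u ++ a :: v

def rightSeed (a : A) (v w : List A) (i : ℕ) : List A :=
  if i % 2 = 0 then v ++ a :: w else w

def centerIndex (τ : A → List A) (a : A) (u v : List A) (m : ℕ) : ℕ :=
  (leftWord τ (leftSeed a u v) m).length

theorem two_le_of_eq_append (hlen : ∀ c, (τ c).length = p)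
    (hτa : τ a = u ++ a :: (v ++ a :: w)) : 2 ≤ p := by
  have := congrArg List.length hτa
  simp only [hlen, List.length_append, List.length_cons] at this
  omega

theorem leftWord_append_cons_rightWord (hτa : τ a = u ++ a :: (v ++ a :: w)) (m : ℕ) :
    leftWord τ (leftSeed a u v) m ++ a :: rightWord τ (rightSeed a v w) m =
      (substWord τ)^[m + 1] [a] := by
  induction m with
  | zero => simp [leftWord, rightWord, leftSeed, rightSeed, substWord_singleton, hτa]
  | succ m ih =>
    rw [iterate_succ_apply, substWord_singleton, hτa, leftWord, rightWord, leftSeed, rightSeed]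
    split_ifs
    · rw [show u ++ a :: (v ++ a :: w) = u ++ ([a] ++ (v ++ a :: w)) by simp,
        iterate_substWord_append τ _ u, iterate_substWord_append τ _ [a], ← ih]
      simp
    · rw [show u ++ a :: (v ++ a :: w) = u ++ a :: v ++ ([a] ++ w) by simp,
        iterate_substWord_append τ _ (u ++ a :: v), iterate_substWord_append τ _ [a], ← ih]
      simp

theorem centerIndex_congr (hlen : ∀ c, (τ c).length = p) (hu : u.length = u'.length)
    (hv : v.length = v'.length) : centerIndex τ a u v = centerIndex τ b u' v' := by
  funext m
  refine length_leftWord_congr hlen (fun i => ?_) m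
  unfold leftSeed
  split_ifs <;> simp [hu, hv]

theorem centerIndex_even_succ (hlen : ∀ c, (τ c).length = p) (k : ℕ) :
    centerIndex τ a u v (2 * k + 2) =
      p ^ (2 * k + 2) * u.length + centerIndex τ a u v (2 * k + 1) := by
  rw [centerIndex, length_leftWord_succ hlen, leftSeed, if_pos (by omega)]
  rfl

theorem centerIndex_odd_bounds (hlen : ∀ c, (τ c).length = p)
    (hτa : τ a = u ++ a :: (v ++ a :: w)) (k : ℕ) :
    2 * k + 2 ≤ centerIndex τ a u v (2 * k + 1) ∧
      centerIndex τ a u v (2 * k + 1) + (2 * k + 2) ≤ p ^ (2 * k + 2) := by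
  have hp := two_le_of_eq_append hlen hτa
  have hleft := le_length_leftWord hlen (leftSeed a u v) (2 * k + 1)
  have hright := le_length_rightWord hlen (rightSeed a v w) (2 * k)
  simp only [leftSeed, rightSeed, if_neg (show (2 * k + 1) % 2 ≠ 0 by omega),
    if_pos (show 2 * k % 2 = 0 by omega), List.length_append, List.length_cons] at hleft hright
  have htotal := congrArg List.length (leftWord_append_cons_rightWord hτa (2 * k + 1))
  rw [length_iterate_substWord hlen, rightWord, List.length_append, List.length_cons,
    List.length_append, List.length_singleton, mul_one] at htotal
  change _ = p ^ (2 * k + 2) at htotal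
  have hpow₁ := Nat.lt_pow_self (n := 2 * k + 1) hp
  have hpow₂ := Nat.lt_pow_self (n := 2 * k) hp
  have hmul₁ := Nat.le_mul_of_pos_right (p ^ (2 * k + 1)) (by omega : 0 < u.length + (v.length + 1))
  have hmul₂ := Nat.le_mul_of_pos_right (p ^ (2 * k)) (by omega : 0 < v.length + (w.length + 1))
  unfold centerIndex
  omega

theorem OccursAt.of_iterate_succ (hlen : ∀ c, (τ c).length = p)
    (hτa : τ a = u ++ a :: (v ++ a :: w)) {e : ℕ} {s : ℤ}
    (h : OccursAt x ((substWord τ)^[e + 1] [a]) s) :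
    OccursAt x ((substWord τ)^[e] (v ++ a :: w)) (s + (p ^ e * (u.length + 1) : ℕ)) := by
  rw [iterate_succ_apply, substWord_singleton, hτa,
    show u ++ a :: (v ++ a :: w) = u ++ [a] ++ (v ++ a :: w) ++ [] by simp,
    iterate_substWord_append, iterate_substWord_append] at h
  simpa [length_iterate_substWord hlen] using h.infix

theorem occursAt_center_of_getD [Inhabited A] (hτa : τ a = u ++ a :: (v ++ a :: w))
    (hx : ∀ m j : ℕ,
      j < (leftWord τ (leftSeed a u v) m ++ a :: rightWord τ (rightSeed a v w) m).length →
      x ((j : ℤ) - ((leftWord τ (leftSeed a u v) m).length : ℤ)) =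
        (leftWord τ (leftSeed a u v) m ++ a :: rightWord τ (rightSeed a v w) m).getD j default)
    (m : ℕ) : OccursAt x ((substWord τ)^[m + 1] [a]) (-centerIndex τ a u v m) := by
  rw [← leftWord_append_cons_rightWord hτa]
  exact occursAt_neg_of_getD (hx m)

theorem OccursAt.apply_zero (hτa : τ a = u ++ a :: (v ++ a :: w))
    (hx : OccursAt x ((substWord τ)^[1] [a]) (-centerIndex τ a u v 0)) : x 0 = a := by
  rw [iterate_one, substWord_singleton, hτa, ← List.singleton_append, ← List.append_assoc] at hx
  simpa [centerIndex, leftWord, leftSeed] using hx.infix 0 (by simp)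

theorem OccursAt.periodic_of_center (hlen : ∀ c, (τ c).length = p)
    (hτa : τ a = u ++ a :: (v ++ a :: w))
    (hx : ∀ m, OccursAt x ((substWord τ)^[m + 1] [a]) (-centerIndex τ a u v m)) (k : ℕ)
    {j : ℤ} (hj : |j| ≤ 2 * (k : ℤ) + 1) :
    x (j + (p ^ (2 * k + 2) * (v.length + 1) : ℕ)) = x j := by
  obtain ⟨hlo, hhi⟩ := centerIndex_odd_bounds hlen hτa k
  obtain ⟨hj₁, hj₂⟩ := abs_le.mp hj
  have hsecond : OccursAt x ((substWord τ)^[2 * k + 2] [a])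
      (-centerIndex τ a u v (2 * k + 1) + (p ^ (2 * k + 2) * (v.length + 1) : ℕ)) := by
    have h := (hx (2 * k + 2)).of_iterate_succ hlen hτa
    rw [show v ++ a :: w = v ++ [a] ++ w by simp, iterate_substWord_append,
      iterate_substWord_append] at h
    convert h.infix using 1
    rw [centerIndex_even_succ hlen, length_iterate_substWord hlen]
    push_cast
    ring
  have hfirst : OccursAt x ((substWord τ)^[2 * k + 2] [a]) (-centerIndex τ a u v (2 * k + 1)) :=
    hx (2 * k + 1)
  rw [hfirst.apply_eq hsecond (i := j) (by omega)
    (by rw [length_iterate_substWord hlen, List.length_singleton, mul_one]; omega)]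
  congr 1
  ring

theorem exists_common_period (hlen : ∀ c, (τ c).length = p)
    (hτa : τ a = u ++ a :: (v ++ a :: w)) (hτb : τ b = u' ++ b :: (v' ++ b :: w'))
    (hv : v.length = v'.length)
    (hx : ∀ m, OccursAt x ((substWord τ)^[m + 1] [a]) (-centerIndex τ a u v m))
    (hy : ∀ m, OccursAt y ((substWord τ)^[m + 1] [b]) (-centerIndex τ b u' v' m)) (N K : ℕ) :
    ∃ k : ℕ, K ≤ k ∧ 1 ≤ k ∧ ∀ j : ℤ, |j| ≤ N → x (j + k) = x j ∧ y (j + k) = y j := by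
  have hpow := Nat.lt_pow_self (n := 2 * (N + K) + 2) (two_le_of_eq_append hlen hτa)
  have hN : (N : ℤ) ≤ 2 * ((N + K : ℕ) : ℤ) + 1 := by push_cast; omega
  refine ⟨p ^ (2 * (N + K) + 2) * (v.length + 1), ?_, ?_, fun j hj => ⟨?_, ?_⟩⟩
  · have := Nat.le_mul_of_pos_right (p ^ (2 * (N + K) + 2)) (by omega : 0 < v.length + 1)
    omega
  · exact Nat.mul_pos (by omega) (by omega)
  · exact OccursAt.periodic_of_center hlen hτa hx (N + K) (hj.trans hN)
  · rw [hv]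
    exact OccursAt.periodic_of_center hlen hτb hy (N + K) (hj.trans hN)

theorem OccursAt.iterate_getElem_of_center (hlen : ∀ c, (τ c).length = p)
    (hτa : τ a = u ++ a :: (v ++ a :: w)) {u₀ v₀ : List A} (hu : u.length = u₀.length)
    (hx : ∀ m, OccursAt x ((substWord τ)^[m + 1] [a]) (-centerIndex τ b u₀ v₀ m)) (k : ℕ)
    {j : ℕ} (hj : j < (v ++ a :: w).length) :
    OccursAt x ((substWord τ)^[2 * k + 2] [(v ++ a :: w)[j]])
      (-centerIndex τ b u₀ v₀ (2 * k + 1) + (p ^ (2 * k + 2) * (j + 1) : ℕ)) := by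
  convert ((hx (2 * k + 2)).of_iterate_succ hlen hτa).iterate_substWord_getElem hlen hj using 1
  rw [centerIndex_even_succ hlen, hu]
  push_cast
  ring

theorem isProximalPair_of_center [Inhabited A] (hlen : ∀ c, (τ c).length = p)
    (hτa : τ a = u ++ a :: (v ++ a :: w)) (hτb : τ b = u' ++ b :: (v' ++ b :: w'))
    (hu : u.length = u'.length) (hv : v.length = v'.length)
    (hco : ∃ j : ℕ, j < (v ++ a :: w).length ∧
      (v ++ a :: w).getD j default = (v' ++ b :: w').getD j default)
    (hx : ∀ m, OccursAt x ((substWord τ)^[m + 1] [a]) (-centerIndex τ a u v m))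
    (hy : ∀ m, OccursAt y ((substWord τ)^[m + 1] [b]) (-centerIndex τ a u v m)) :
    IsProximalPair x y := by
  intro N M
  obtain ⟨j, hj, hcoin⟩ := hco
  have hj' : j < (v' ++ b :: w').length := by
    have := congrArg List.length hτa
    have := congrArg List.length hτb
    simp only [hlen, List.length_append, List.length_cons] at *
    omega
  obtain ⟨hlo, hhi⟩ := centerIndex_odd_bounds hlen hτa (N + M)
  have hxb := OccursAt.iterate_getElem_of_center hlen hτa rfl hx (N + M) hj
  have hyb := OccursAt.iterate_getElem_of_center hlen hτb hu.symm hy (N + M) hj'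
  rw [← List.getD_eq_getElem _ default hj', ← hcoin, List.getD_eq_getElem _ default hj] at hyb
  have hP := Nat.le_mul_of_pos_right (p ^ (2 * (N + M) + 2)) (by omega : 0 < j + 1)
  set P := p ^ (2 * (N + M) + 2) * (j + 1)
  refine ⟨P - centerIndex τ a u v (2 * (N + M) + 1) + N, by omega, fun i hi => ?_⟩
  obtain ⟨hi₁, hi₂⟩ := abs_le.mp hi
  rw [hxb.apply_eq hyb (by omega)
    (by rw [length_iterate_substWord hlen, List.length_singleton]; omega)]
  congr 1
  ring

theorem exists_central_window [Inhabited A] (hlen : ∀ c, (τ c).length = p)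
    (hτa : τ a = u ++ a :: (v ++ a :: w))
    (hx : ∀ m, OccursAt x ((substWord τ)^[m + 1] [a]) (-centerIndex τ a u v m))
    (hy : ∀ m, OccursAt y ((substWord τ)^[m + 1] [b]) (-centerIndex τ a u v m)) (n : ℕ) :
    ∃ m k : ℕ,
      (∀ j : ℕ, j ≤ 2 * n → k + j < ((substWord τ)^[2 * m] [a]).length) ∧
      ∀ j : ℕ, j ≤ 2 * n →
        x ((j : ℤ) - (n : ℤ)) = ((substWord τ)^[2 * m] [a]).getD (k + j) default ∧
        y ((j : ℤ) - (n : ℤ)) = ((substWord τ)^[2 * m] [b]).getD (k + j) default := by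
  obtain ⟨hlo, hhi⟩ := centerIndex_odd_bounds hlen hτa n
  have hlength : ∀ c, ((substWord τ)^[2 * n + 1 + 1] [c]).length = p ^ (2 * n + 2) := by
    intro c
    rw [length_iterate_substWord hlen, List.length_singleton, mul_one]
  refine ⟨n + 1, centerIndex τ a u v (2 * n + 1) - n, fun j hj => ?_, fun j hj => ?_⟩
  · rw [show 2 * (n + 1) = 2 * n + 1 + 1 by ring, hlength]
    omega
  · have hidx : -(centerIndex τ a u v (2 * n + 1) : ℤ) +
        (centerIndex τ a u v (2 * n + 1) - n + j : ℕ) = j - n := by omega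
    have hj' : centerIndex τ a u v (2 * n + 1) - n + j < p ^ (2 * n + 2) := by omega
    rw [show 2 * (n + 1) = 2 * n + 1 + 1 by ring, List.getD_eq_getElem _ _ (by rwa [hlength]),
      List.getD_eq_getElem _ _ (by rwa [hlength]), ← hidx]
    exact ⟨hx _ _ _, hy _ _ _⟩

end StrongLiYorke

theorem stmt12_general {A : Type*} [Inhabited A]
    (τ : A → List A) (p : ℕ)
    (hlen : ∀ a : A, (τ a).length = p)
    (a b : A) (hab : a ≠ b) (u v w u' v' w' : List A)
    (hτa : τ a = u ++ a :: (v ++ a :: w))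
    (hτb : τ b = u' ++ b :: (v' ++ b :: w'))
    (hu : u.length = u'.length)
    (hv : v.length = v'.length)
    (hco : ∃ j : ℕ, j < (v ++ a :: w).length ∧
      (v ++ a :: w).getD j default = (v' ++ b :: w').getD j default)
    (x y : ℤ → A)
    (hx : ∀ m j : ℕ,
      j < (leftWord τ (fun i => if i % 2 = 0 then u else u ++ a :: v) m ++
            a :: rightWord τ (fun i => if i % 2 = 0 then v ++ a :: w else w) m).length →
      x ((j : ℤ) -
          ((leftWord τ (fun i => if i % 2 = 0 then u else u ++ a :: v) m).length : ℤ)) =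
        (leftWord τ (fun i => if i % 2 = 0 then u else u ++ a :: v) m ++
          a :: rightWord τ (fun i => if i % 2 = 0 then v ++ a :: w else w) m).getD
          j default)
    (hy : ∀ m j : ℕ,
      j < (leftWord τ (fun i => if i % 2 = 0 then u' else u' ++ b :: v') m ++
            b :: rightWord τ (fun i => if i % 2 = 0 then v' ++ b :: w' else w') m).length →
      y ((j : ℤ) -
          ((leftWord τ (fun i => if i % 2 = 0 then u' else u' ++ b :: v') m).length : ℤ)) =
        (leftWord τ (fun i => if i % 2 = 0 then u' else u' ++ b :: v') m ++
          b :: rightWord τ (fun i => if i % 2 = 0 then v' ++ b :: w' else w') m).getD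
          j default) :
    IsLiYorkePair x y ∧
      -- `(x,y)` is a recurrent point of `T × T`:
      (∀ N : ℕ, ∃ k : ℕ, 1 ≤ k ∧ ∀ j : ℤ, |j| ≤ (N : ℤ) →
        x (j + k) = x j ∧ y (j + k) = y j) ∧
      -- every central window of `(x,y)` occurs as a subword-pair of
      -- `(τ^{2m}(a), τ^{2m}(b))`:
      (∀ n : ℕ, ∃ m k : ℕ,
        (∀ j : ℕ, j ≤ 2 * n → k + j < ((substWord τ)^[2 * m] [a]).length) ∧
        ∀ j : ℕ, j ≤ 2 * n →
          x ((j : ℤ) - (n : ℤ)) = ((substWord τ)^[2 * m] [a]).getD (k + j) default ∧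
          y ((j : ℤ) - (n : ℤ)) = ((substWord τ)^[2 * m] [b]).getD (k + j) default) := by
  have hxc := occursAt_center_of_getD hτa hx
  have hyc := occursAt_center_of_getD hτb hy
  have hyc' : ∀ m, OccursAt y ((substWord τ)^[m + 1] [b]) (-centerIndex τ a u v m) := by
    rwa [centerIndex_congr hlen hu hv]
  have hrec := exists_common_period hlen hτa hτb hv hxc hyc
  refine ⟨⟨isProximalPair_of_center hlen hτa hτb hu hv hco hxc hyc', ?_⟩, fun N => ?_,
    exists_central_window hlen hτa hxc hyc'⟩
  · refine infinite_setOf_ne_of_recurrent ?_ fun K => ?_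
    · rwa [(hxc 0).apply_zero hτa, (hyc 0).apply_zero hτb]
    · obtain ⟨k, hK, -, hk⟩ := hrec 0 K
      exact ⟨k, hK, by simpa using hk 0 (by simp)⟩
  · obtain ⟨k, -, hk⟩ := hrec N 0
    exact ⟨k, hk⟩

/-- Proposition 3.9: with `τ(a) = u a v a w`, `τ(b) = u' b v' b w'`,
`|u| = |u'| ≠ 0`, `|v| = |v'|`, `|w| = |w'| ≠ 0` and a coincidence between
`vaw` and `v'bw'`, the pair
`x = … τ²(u) τ(uav) u . a (vaw) τ(w) τ²(vaw) …`,
`y = … τ²(u') τ(u'bv') u' . b (v'bw') τ(w') τ²(v'bw') …`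
is a Li–Yorke pair which is recurrent under `T × T` (a strong Li–Yorke pair):
for every `n` the central window `(x(-n,n), y(-n,n))` occurs as a subword-pair
of `(τ^{2m}(a), τ^{2m}(b))` for some `m`. -/
theorem stmt12 {A : Type*} [Fintype A] [Inhabited A]
    (τ : A → List A) (p : ℕ) (hp : 2 ≤ p)
    (hlen : ∀ a : A, (τ a).length = p)
    (hprim : IsPrimitive τ) (hinj : Function.Injective τ)
    (hinf : (XSet τ).Infinite)
    (a b : A) (hab : a ≠ b) (u v w u' v' w' : List A)
    (hτa : τ a = u ++ a :: (v ++ a :: w))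
    (hτb : τ b = u' ++ b :: (v' ++ b :: w'))
    (hu : u.length = u'.length) (hu0 : u.length ≠ 0)
    (hv : v.length = v'.length)
    (hw : w.length = w'.length) (hw0 : w.length ≠ 0)
    (hco : ∃ j : ℕ, j < (v ++ a :: w).length ∧
      (v ++ a :: w).getD j default = (v' ++ b :: w').getD j default)
    (x y : ℤ → A)
    (hx : ∀ m j : ℕ,
      j < (leftWord τ (fun i => if i % 2 = 0 then u else u ++ a :: v) m ++
            a :: rightWord τ (fun i => if i % 2 = 0 then v ++ a :: w else w) m).length →
      x ((j : ℤ) -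
          ((leftWord τ (fun i => if i % 2 = 0 then u else u ++ a :: v) m).length : ℤ)) =
        (leftWord τ (fun i => if i % 2 = 0 then u else u ++ a :: v) m ++
          a :: rightWord τ (fun i => if i % 2 = 0 then v ++ a :: w else w) m).getD
          j default)
    (hy : ∀ m j : ℕ,
      j < (leftWord τ (fun i => if i % 2 = 0 then u' else u' ++ b :: v') m ++
            b :: rightWord τ (fun i => if i % 2 = 0 then v' ++ b :: w' else w') m).length →
      y ((j : ℤ) -
          ((leftWord τ (fun i => if i % 2 = 0 then u' else u' ++ b :: v') m).length : ℤ)) =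
        (leftWord τ (fun i => if i % 2 = 0 then u' else u' ++ b :: v') m ++
          b :: rightWord τ (fun i => if i % 2 = 0 then v' ++ b :: w' else w') m).getD
          j default) :
    IsLiYorkePair x y ∧
      -- `(x,y)` is a recurrent point of `T × T`:
      (∀ N : ℕ, ∃ k : ℕ, 1 ≤ k ∧ ∀ j : ℤ, |j| ≤ (N : ℤ) →
        x (j + k) = x j ∧ y (j + k) = y j) ∧
      -- every central window of `(x,y)` occurs as a subword-pair of
      -- `(τ^{2m}(a), τ^{2m}(b))`:
      (∀ n : ℕ, ∃ m k : ℕ,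
        (∀ j : ℕ, j ≤ 2 * n → k + j < ((substWord τ)^[2 * m] [a]).length) ∧
        ∀ j : ℕ, j ≤ 2 * n →
          x ((j : ℤ) - (n : ℤ)) = ((substWord τ)^[2 * m] [a]).getD (k + j) default ∧
          y ((j : ℤ) - (n : ℤ)) = ((substWord τ)^[2 * m] [b]).getD (k + j) default) :=
  stmt12_general τ p hlen a b hab u v w u' v' w' hτa hτb hu hv hco x y hx hy
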